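/- Main Theorem (Yekutieli): If F : G → H is a weak equivalence between cosimplicial crossed groupoids, then the induced function Desc-bar(F) : Desc-bar(G) → Desc-bar(H) on gauge equivalence classes of combinatorial descent data is bijective. -/

import Mathlib

/-! Crossed groupoids (= crossed modules over groupoids), following Yekutieli,
"Combinatorial descent data for gerbes". -/

structure CrossedGroupoid : Type 1 where
  Obj : Type
  Hom : Obj → Obj → Type
  id : ∀ x, Hom x x
  comp : ∀ {x y z}, Hom y z → Hom x y → Hom x z
  inv : ∀ {x y}, Hom x y → Hom y x
  comp_assoc : ∀ {x y z w} (h : Hom z w) (g : Hom y z) (f : Hom x y),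
    comp (comp h g) f = comp h (comp g f)
  id_comp : ∀ {x y} (f : Hom x y), comp (id y) f = f
  comp_id : ∀ {x y} (f : Hom x y), comp f (id x) = f
  inv_comp : ∀ {x y} (f : Hom x y), comp (inv f) f = id x
  comp_inv : ∀ {x y} (f : Hom x y), comp f (inv f) = id y
  -- the totally disconnected groupoid 𝒢₂, i.e. a family of groups
  G2 : Obj → Type
  mul : ∀ {x}, G2 x → G2 x → G2 x
  one : ∀ x, G2 x
  inv2 : ∀ {x}, G2 x → G2 x
  mul_assoc : ∀ {x} (a b c : G2 x), mul (mul a b) c = mul a (mul b c)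
  one_mul : ∀ {x} (a : G2 x), mul (one x) a = a
  mul_one : ∀ {x} (a : G2 x), mul a (one x) = a
  inv2_mul : ∀ {x} (a : G2 x), mul (inv2 a) a = one x
  -- the twisting: an action of 𝒢₁ on 𝒢₂
  Ad : ∀ {x y}, Hom x y → G2 x → G2 y
  Ad_mul : ∀ {x y} (g : Hom x y) (a b : G2 x), Ad g (mul a b) = mul (Ad g a) (Ad g b)
  Ad_one : ∀ {x y} (g : Hom x y), Ad g (one x) = one y
  Ad_id : ∀ {x} (a : G2 x), Ad (id x) a = a
  Ad_comp : ∀ {x y z} (h : Hom y z) (g : Hom x y) (a : G2 x),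
    Ad (comp h g) a = Ad h (Ad g a)
  -- the feedback D : 𝒢₂ → 𝒢₁, identity on objects
  D : ∀ {x}, G2 x → Hom x x
  D_mul : ∀ {x} (a b : G2 x), D (mul a b) = comp (D a) (D b)
  D_one : ∀ x, D (one x) = id x
  -- equivariance of the feedback
  D_Ad : ∀ {x y} (g : Hom x y) (a : G2 x), D (Ad g a) = comp (comp g (D a)) (inv g)
  -- Peiffer condition
  peiffer : ∀ {x} (a b : G2 x), Ad (D a) b = mul (mul a b) (inv2 a)

namespace CrossedGroupoid

/-- Transport of 1-morphisms along equalities of objects. -/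
def hcast (G : CrossedGroupoid) {x x' y y' : G.Obj} (ex : x = x') (ey : y = y')
    (f : G.Hom x y) : G.Hom x' y' := ey ▸ ex ▸ f

/-- Transport of 2-morphisms along an equality of objects. -/
def cast2 (G : CrossedGroupoid) {x x' : G.Obj} (e : x = x') (a : G.G2 x) : G.G2 x' := e ▸ a

/-- The relation "isomorphic in 𝒢₁". -/
def pi0Rel (G : CrossedGroupoid) : G.Obj → G.Obj → Prop := fun x y => Nonempty (G.Hom x y)

/-- π₀ of a crossed groupoid: isomorphism classes of objects of 𝒢₁. -/
def pi0 (G : CrossedGroupoid) : Type := Quot G.pi0Rel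

/-- The right action relation on a hom-set: g' = g ∘ D(a). -/
def homRel (G : CrossedGroupoid) (x x' : G.Obj) : G.Hom x x' → G.Hom x x' → Prop :=
  fun g g' => ∃ a : G.G2 x, g' = G.comp g (G.D a)

/-- π₁(G, x, x') := 𝒢₁(x,x') / 𝒢₂(x). -/
def pi1' (G : CrossedGroupoid) (x x' : G.Obj) : Type := Quot (G.homRel x x')

/-- π₁(G, x) = Coker(D : 𝒢₂(x) → 𝒢₁(x)) as a quotient set. -/
def pi1 (G : CrossedGroupoid) (x : G.Obj) : Type := G.pi1' x x

/-- π₂(G, x) = Ker(D : 𝒢₂(x) → 𝒢₁(x)). -/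
def pi2 (G : CrossedGroupoid) (x : G.Obj) : Type := {a : G.G2 x // G.D a = G.id x}

end CrossedGroupoid

/-- A morphism of crossed groupoids. -/
structure CrossedGroupoidHom (G H : CrossedGroupoid) where
  obj : G.Obj → H.Obj
  map1 : ∀ {x y : G.Obj}, G.Hom x y → H.Hom (obj x) (obj y)
  map2 : ∀ {x : G.Obj}, G.G2 x → H.G2 (obj x)
  map1_comp : ∀ {x y z : G.Obj} (g : G.Hom y z) (f : G.Hom x y),
    map1 (G.comp g f) = H.comp (map1 g) (map1 f)
  map1_id : ∀ x : G.Obj, map1 (G.id x) = H.id (obj x)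
  map2_mul : ∀ {x : G.Obj} (a b : G.G2 x), map2 (G.mul a b) = H.mul (map2 a) (map2 b)
  map_D : ∀ {x : G.Obj} (a : G.G2 x), map1 (G.D a) = H.D (map2 a)
  map_Ad : ∀ {x y : G.Obj} (g : G.Hom x y) (a : G.G2 x),
    map2 (G.Ad g a) = H.Ad (map1 g) (map2 a)

namespace CrossedGroupoidHom

/-- Identity morphism of crossed groupoids. -/
def id (G : CrossedGroupoid) : CrossedGroupoidHom G G where
  obj := fun x => x
  map1 := fun f => f
  map2 := fun a => a
  map1_comp := fun _ _ => rfl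
  map1_id := fun _ => rfl
  map2_mul := fun _ _ => rfl
  map_D := fun _ => rfl
  map_Ad := fun _ _ => rfl

/-- Composition of morphisms of crossed groupoids. -/
def comp {G H K : CrossedGroupoid} (F₂ : CrossedGroupoidHom H K) (F₁ : CrossedGroupoidHom G H) :
    CrossedGroupoidHom G K where
  obj := fun x => F₂.obj (F₁.obj x)
  map1 := fun f => F₂.map1 (F₁.map1 f)
  map2 := fun a => F₂.map2 (F₁.map2 a)
  map1_comp := fun g f => by (try dsimp only); rw [F₁.map1_comp, F₂.map1_comp]
  map1_id := fun x => by (try dsimp only); rw [F₁.map1_id, F₂.map1_id]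
  map2_mul := fun a b => by (try dsimp only); rw [F₁.map2_mul, F₂.map2_mul]
  map_D := fun a => by (try dsimp only); rw [F₁.map_D, F₂.map_D]
  map_Ad := fun g a => by (try dsimp only); rw [F₁.map_Ad, F₂.map_Ad]

variable {G H : CrossedGroupoid}

/-- The induced map on π₀. -/
def pi0map (F : CrossedGroupoidHom G H) : G.pi0 → H.pi0 :=
  Quot.map F.obj (fun _ _ h => ⟨F.map1 h.some⟩)

/-- The induced map on π₁(−, x, x'). -/
def pi1'map (F : CrossedGroupoidHom G H) (x x' : G.Obj) :
    G.pi1' x x' → H.pi1' (F.obj x) (F.obj x') :=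
  Quot.map F.map1 (by
    rintro g g' ⟨a, rfl⟩
    exact ⟨F.map2 a, by rw [F.map1_comp, F.map_D]⟩)

/-- The induced map on π₁(−, x). -/
def pi1map (F : CrossedGroupoidHom G H) (x : G.Obj) : G.pi1 x → H.pi1 (F.obj x) :=
  F.pi1'map x x

/-- The induced map on π₂(−, x). -/
def pi2map (F : CrossedGroupoidHom G H) (x : G.Obj) : G.pi2 x → H.pi2 (F.obj x) :=
  fun a => ⟨F.map2 a.1, by rw [← F.map_D, a.2, F.map1_id]⟩

/-- A weak equivalence of crossed groupoids: bijective on π₀, π₁ and π₂. -/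
def IsWeakEquiv (F : CrossedGroupoidHom G H) : Prop :=
  Function.Bijective F.pi0map ∧ (∀ x, Function.Bijective (F.pi1map x)) ∧
    (∀ x, Function.Bijective (F.pi2map x))

end CrossedGroupoidHom

/-! ### Combinatorics of the simplex category -/

/-- The vertex (i) of Δ^q, as a monotone map Δ⁰ → Δ^q. -/
def vtxMap {q : ℕ} (i : Fin (q + 1)) : Fin 1 →o Fin (q + 1) :=
  ⟨fun _ => i, fun _ _ _ => le_rfl⟩

/-- The edge (i,j) of Δ^q, as a monotone map Δ¹ → Δ^q. -/
def edgeMap {q : ℕ} (i j : Fin (q + 1)) (h : i ≤ j) : Fin 2 →o Fin (q + 1) :=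
  ⟨fun k => if (k : ℕ) = 0 then i else j, by
    intro a b hab
    have hab' : (a : ℕ) ≤ (b : ℕ) := hab
    show (if (a : ℕ) = 0 then i else j) ≤ (if (b : ℕ) = 0 then i else j)
    by_cases ha : (a : ℕ) = 0
    · by_cases hb : (b : ℕ) = 0
      · rw [if_pos ha, if_pos hb]
      · rw [if_pos ha, if_neg hb]; exact h
    · have hb : ¬ (b : ℕ) = 0 := fun hb0 => ha (Nat.le_zero.mp (hb0 ▸ hab'))
      rw [if_neg ha, if_neg hb]⟩

/-- The triangle (i,j,k) of Δ^q, as a monotone map Δ² → Δ^q. -/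
def triMap {q : ℕ} (i j k : Fin (q + 1)) (hij : i ≤ j) (hjk : j ≤ k) :
    Fin 3 →o Fin (q + 1) :=
  ⟨fun m => if (m : ℕ) = 0 then i else if (m : ℕ) = 1 then j else k, by
    intro a b hab
    have hab' : (a : ℕ) ≤ (b : ℕ) := hab
    show (if (a : ℕ) = 0 then i else if (a : ℕ) = 1 then j else k) ≤
      (if (b : ℕ) = 0 then i else if (b : ℕ) = 1 then j else k)
    by_cases ha0 : (a : ℕ) = 0
    · by_cases hb0 : (b : ℕ) = 0
      · rw [if_pos ha0, if_pos hb0]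
      · by_cases hb1 : (b : ℕ) = 1
        · rw [if_pos ha0, if_neg hb0, if_pos hb1]; exact hij
        · rw [if_pos ha0, if_neg hb0, if_neg hb1]; exact hij.trans hjk
    · by_cases ha1 : (a : ℕ) = 1
      · have hb0 : ¬ (b : ℕ) = 0 := by omega
        by_cases hb1 : (b : ℕ) = 1
        · rw [if_neg ha0, if_pos ha1, if_neg hb0, if_pos hb1]
        · rw [if_neg ha0, if_pos ha1, if_neg hb0, if_neg hb1]; exact hjk
      · have hb0 : ¬ (b : ℕ) = 0 := by omega
        have hb1 : ¬ (b : ℕ) = 1 := by omega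
        rw [if_neg ha0, if_neg ha1, if_neg hb0, if_neg hb1]⟩

theorem comp_vtxMap {p q : ℕ} (α : Fin (p + 1) →o Fin (q + 1)) (i : Fin (p + 1)) :
    α.comp (vtxMap i) = vtxMap (α i) := rfl

/-! ### Cosimplicial crossed groupoids -/

/-- A cosimplicial crossed groupoid: a functor Δ → CrGrpd. -/
structure CosimplicialCrossedGroupoid : Type 1 where
  obj : ℕ → CrossedGroupoid
  map : ∀ {p q : ℕ}, (Fin (p + 1) →o Fin (q + 1)) → CrossedGroupoidHom (obj p) (obj q)
  map_id : ∀ p, map (OrderHom.id : Fin (p + 1) →o Fin (p + 1)) = CrossedGroupoidHom.id (obj p)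
  map_comp : ∀ {p q r : ℕ} (β : Fin (q + 1) →o Fin (r + 1)) (α : Fin (p + 1) →o Fin (q + 1)),
    map (β.comp α) = (map β).comp (map α)

namespace CosimplicialCrossedGroupoid

variable (G : CosimplicialCrossedGroupoid)

theorem obj_comp {p q r : ℕ} (β : Fin (q + 1) →o Fin (r + 1)) (α : Fin (p + 1) →o Fin (q + 1))
    (x : (G.obj p).Obj) :
    (G.map β).obj ((G.map α).obj x) = (G.map (β.comp α)).obj x := by
  rw [G.map_comp]; rfl

/-- The object x of G⁰ pushed to the vertex (i) of Δ^q. -/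
def X (x : (G.obj 0).Obj) (q : ℕ) (i : Fin (q + 1)) : (G.obj q).Obj :=
  (G.map (vtxMap i)).obj x

theorem X_push (x : (G.obj 0).Obj) {p q : ℕ} (α : Fin (p + 1) →o Fin (q + 1))
    (i : Fin (p + 1)) : (G.map α).obj (G.X x p i) = G.X x q (α i) := by
  unfold X
  rw [obj_comp, comp_vtxMap]

/-- Pushing a 1-morphism between vertex objects along α. -/
def push1 {x : (G.obj 0).Obj} {p q : ℕ} (α : Fin (p + 1) →o Fin (q + 1))
    {i j : Fin (p + 1)} (g : (G.obj p).Hom (G.X x p i) (G.X x p j)) :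
    (G.obj q).Hom (G.X x q (α i)) (G.X x q (α j)) :=
  (G.obj q).hcast (G.X_push x α i) (G.X_push x α j) ((G.map α).map1 g)

/-- Pushing a 2-morphism at a vertex object along α. -/
def push2 {x : (G.obj 0).Obj} {p q : ℕ} (α : Fin (p + 1) →o Fin (q + 1))
    {i : Fin (p + 1)} (a : (G.obj p).G2 (G.X x p i)) :
    (G.obj q).G2 (G.X x q (α i)) :=
  (G.obj q).cast2 (G.X_push x α i) ((G.map α).map2 a)

/-- Yekutieli's combinatorial descent conditions (Definition 1.5):
the failure-of-1-cocycle condition and the twisted 2-cocycle condition. -/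
def IsDescent (x : (G.obj 0).Obj)
    (g : (G.obj 1).Hom (G.X x 1 0) (G.X x 1 1))
    (a : (G.obj 2).G2 (G.X x 2 0)) : Prop :=
  ((G.obj 2).comp ((G.obj 2).comp ((G.obj 2).inv (G.push1 (edgeMap 0 2 (by decide)) g))
      (G.push1 (edgeMap 1 2 (by decide)) g)) (G.push1 (edgeMap 0 1 (by decide)) g)
    = (G.obj 2).D a)
  ∧
  ((G.obj 3).mul ((G.obj 3).mul
        ((G.obj 3).inv2 (G.push2 (triMap 0 1 3 (by decide) (by decide)) a))
        (G.push2 (triMap 0 2 3 (by decide) (by decide)) a))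
      (G.push2 (triMap 0 1 2 (by decide) (by decide)) a)
    = (G.obj 3).Ad ((G.obj 3).inv (G.push1 (edgeMap 0 1 (by decide)) g))
        (G.push2 (triMap 1 2 3 (by decide) (by decide)) a))

/-- A combinatorial descent datum (Definition 1.5). -/
structure Desc (G : CosimplicialCrossedGroupoid) where
  x : (G.obj 0).Obj
  g : (G.obj 1).Hom (G.X x 1 0) (G.X x 1 1)
  a : (G.obj 2).G2 (G.X x 2 0)
  isDescent : G.IsDescent x g a

/-- The Yekutieli gauge-transformation conditions (Definition 1.7) for a pair (f, c). -/
def IsGauge (x : (G.obj 0).Obj) (g : (G.obj 1).Hom (G.X x 1 0) (G.X x 1 1))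
    (a : (G.obj 2).G2 (G.X x 2 0))
    (x' : (G.obj 0).Obj) (g' : (G.obj 1).Hom (G.X x' 1 0) (G.X x' 1 1))
    (a' : (G.obj 2).G2 (G.X x' 2 0))
    (f : (G.obj 0).Hom x x') (c : (G.obj 1).G2 (G.X x 1 0)) : Prop :=
  (g' = (G.obj 1).comp ((G.obj 1).comp ((G.obj 1).comp
      ((G.map (vtxMap (1 : Fin 2))).map1 f) g) ((G.obj 1).D c))
      ((G.obj 1).inv ((G.map (vtxMap (0 : Fin 2))).map1 f)))
  ∧
  (a' = (G.obj 2).Ad ((G.map (vtxMap (0 : Fin 3))).map1 f)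
    ((G.obj 2).mul ((G.obj 2).mul ((G.obj 2).mul
        ((G.obj 2).inv2 (G.push2 (edgeMap 0 2 (by decide)) c)) a)
        ((G.obj 2).Ad ((G.obj 2).inv (G.push1 (edgeMap 0 1 (by decide)) g))
          (G.push2 (edgeMap 1 2 (by decide)) c)))
      (G.push2 (edgeMap 0 1 (by decide)) c)))

/-- Gauge equivalence of descent data. -/
def GaugeEquiv (P Q : G.Desc) : Prop :=
  ∃ (f : (G.obj 0).Hom P.x Q.x) (c : (G.obj 1).G2 (G.X P.x 1 0)),
    G.IsGauge P.x P.g P.a Q.x Q.g Q.a f c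

/-- The explicit formula for the transported 2-morphism a'
(Definition 1.7(ii) / Lemma 1.9). -/
def transportA {x x' : (G.obj 0).Obj} (f : (G.obj 0).Hom x x')
    (g : (G.obj 1).Hom (G.X x 1 0) (G.X x 1 1))
    (a : (G.obj 2).G2 (G.X x 2 0)) (c : (G.obj 1).G2 (G.X x 1 0)) :
    (G.obj 2).G2 (G.X x' 2 0) :=
  (G.obj 2).Ad ((G.map (vtxMap (0 : Fin 3))).map1 f)
    ((G.obj 2).mul ((G.obj 2).mul ((G.obj 2).mul
        ((G.obj 2).inv2 (G.push2 (edgeMap 0 2 (by decide)) c)) a)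
        ((G.obj 2).Ad ((G.obj 2).inv (G.push1 (edgeMap 0 1 (by decide)) g))
          (G.push2 (edgeMap 1 2 (by decide)) c)))
      (G.push2 (edgeMap 0 1 (by decide)) c))

end CosimplicialCrossedGroupoid

/-- A morphism of cosimplicial crossed groupoids. -/
structure CosimplicialMor (G H : CosimplicialCrossedGroupoid) where
  app : ∀ p, CrossedGroupoidHom (G.obj p) (H.obj p)
  naturality : ∀ {p q : ℕ} (α : Fin (p + 1) →o Fin (q + 1)),
    (app q).comp (G.map α) = (H.map α).comp (app p)

namespace CosimplicialMor

variable {G H : CosimplicialCrossedGroupoid}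

theorem app_X (F : CosimplicialMor G H) (x : (G.obj 0).Obj) (q : ℕ) (i : Fin (q + 1)) :
    (F.app q).obj (G.X x q i) = H.X ((F.app 0).obj x) q i :=
  congrFun (congrArg CrossedGroupoidHom.obj (F.naturality (vtxMap i))) x

/-- Image of an object of G⁰. -/
def objD (F : CosimplicialMor G H) (x : (G.obj 0).Obj) : (H.obj 0).Obj := (F.app 0).obj x

/-- Image of a 1-morphism in dimension 0. -/
def mapF (F : CosimplicialMor G H) {x x' : (G.obj 0).Obj} (f : (G.obj 0).Hom x x') :
    (H.obj 0).Hom (F.objD x) (F.objD x') := (F.app 0).map1 f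

/-- Image of the 1-morphism part of a descent datum. -/
def mapG (F : CosimplicialMor G H) {x : (G.obj 0).Obj}
    (g : (G.obj 1).Hom (G.X x 1 0) (G.X x 1 1)) :
    (H.obj 1).Hom (H.X (F.objD x) 1 0) (H.X (F.objD x) 1 1) :=
  (H.obj 1).hcast (F.app_X x 1 0) (F.app_X x 1 1) ((F.app 1).map1 g)

/-- Image of the 2-morphism part of a descent datum. -/
def mapA (F : CosimplicialMor G H) {x : (G.obj 0).Obj} (a : (G.obj 2).G2 (G.X x 2 0)) :
    (H.obj 2).G2 (H.X (F.objD x) 2 0) :=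
  (H.obj 2).cast2 (F.app_X x 2 0) ((F.app 2).map2 a)

/-- Image of the 2-morphism part of a gauge transformation. -/
def mapC (F : CosimplicialMor G H) {x : (G.obj 0).Obj} (c : (G.obj 1).G2 (G.X x 1 0)) :
    (H.obj 1).G2 (H.X (F.objD x) 1 0) :=
  (H.obj 1).cast2 (F.app_X x 1 0) ((F.app 1).map2 c)

/-- A weak equivalence of cosimplicial crossed groupoids. -/
def IsWeakEquiv (F : CosimplicialMor G H) : Prop := ∀ p, (F.app p).IsWeakEquiv

end CosimplicialMor

/-!
Levelwise, a weak equivalence Φ of crossed groupoids has three lifting properties: every object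
is isomorphic to an image; a morphism between images is an image up to a factor D(c); and if
Φ(g') = Φ(g) ∘ D(c) then g' = g ∘ D(c₁) with Φ(c₁) = c. Moreover, by π₂-injectivity, a
2-morphism is determined by its D and its image.

Surjectivity: gauge-transform a descent datum of H so that its object and its 1-morphism g
become images; the lifted g has a defect g₀₂⁻¹ g₁₂ g₀₁ whose image is D of the transformed
2-morphism, which therefore lifts to some a. Both sides of the twisted 2-cocycle condition for a
have the same D and the same image, so they agree.

Injectivity: the 0-level part f of a gauge transformation between images is an image up to a
factor D(e), and replacing f by f ∘ D(e)⁻¹ (with a correspondingly shifted c) gives a gauge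
transformation with the same effect. Then c lifts by the third property, and the 2-morphism
parts agree because they have equal D and equal images.
-/

namespace CrossedGroupoid

variable (K : CrossedGroupoid)

instance (x : K.Obj) : Mul (K.G2 x) := ⟨K.mul⟩

instance (x : K.Obj) : One (K.G2 x) := ⟨K.one x⟩

instance (x : K.Obj) : Inv (K.G2 x) := ⟨K.inv2⟩

instance (x : K.Obj) : Group (K.G2 x) := Group.ofLeftAxioms K.mul_assoc K.one_mul K.inv2_mul

def AdHom {x y : K.Obj} (g : K.Hom x y) : K.G2 x →* K.G2 y :=
  MonoidHom.mk' (K.Ad g) (K.Ad_mul g)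

theorem mul_inv2 {x : K.Obj} (a : K.G2 x) : K.mul a (K.inv2 a) = K.one x := mul_inv_cancel a

theorem mul_inv2_cancel_left {x : K.Obj} (a b : K.G2 x) : K.mul a (K.mul (K.inv2 a) b) = b :=
  mul_inv_cancel_left a b

theorem inv2_inv2 {x : K.Obj} (a : K.G2 x) : K.inv2 (K.inv2 a) = a := inv_inv a

theorem inv2_mul_rev {x : K.Obj} (a b : K.G2 x) :
    K.inv2 (K.mul a b) = K.mul (K.inv2 b) (K.inv2 a) := mul_inv_rev a b

theorem Ad_inv2 {x y : K.Obj} (g : K.Hom x y) (a : K.G2 x) :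
    K.Ad g (K.inv2 a) = K.inv2 (K.Ad g a) := map_inv (K.AdHom g) a

theorem inv_comp_cancel_left {x y z : K.Obj} (f : K.Hom x y) (g : K.Hom z x) :
    K.comp (K.inv f) (K.comp f g) = g := by
  rw [← K.comp_assoc, K.inv_comp, K.id_comp]

theorem comp_inv_cancel_left {x y z : K.Obj} (f : K.Hom x y) (g : K.Hom z y) :
    K.comp f (K.comp (K.inv f) g) = g := by
  rw [← K.comp_assoc, K.comp_inv, K.id_comp]

theorem eq_inv_of_comp_eq_id {x y : K.Obj} {f : K.Hom x y} {g : K.Hom y x}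
    (h : K.comp g f = K.id x) : g = K.inv f := by
  rw [← K.comp_id g, ← K.comp_inv f, ← K.comp_assoc, h, K.id_comp]

theorem inv_inv {x y : K.Obj} (f : K.Hom x y) : K.inv (K.inv f) = f :=
  (K.eq_inv_of_comp_eq_id (K.comp_inv f)).symm

theorem inv_comp_rev {x y z : K.Obj} (g : K.Hom y z) (f : K.Hom x y) :
    K.inv (K.comp g f) = K.comp (K.inv f) (K.inv g) :=
  (K.eq_inv_of_comp_eq_id (by
    rw [K.comp_assoc, K.inv_comp_cancel_left, K.inv_comp])).symm

theorem D_inv2 {x : K.Obj} (a : K.G2 x) : K.D (K.inv2 a) = K.inv (K.D a) :=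
  K.eq_inv_of_comp_eq_id (by rw [← K.D_mul, K.inv2_mul, K.D_one])

theorem Ad_D_inv {x : K.Obj} (c u : K.G2 x) :
    K.Ad (K.inv (K.D c)) u = K.mul (K.inv2 c) (K.mul u c) := by
  rw [← K.D_inv2, K.peiffer, K.inv2_inv2, K.mul_assoc]

theorem mul_eq_mul_Ad_D_inv {x : K.Obj} (b u : K.G2 x) :
    K.mul u b = K.mul b (K.Ad (K.inv (K.D b)) u) := by
  rw [K.Ad_D_inv, K.mul_inv2_cancel_left]

theorem hcast_hcast {x x' x'' y y' y'' : K.Obj} (ex : x = x') (ey : y = y')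
    (ex' : x' = x'') (ey' : y' = y'') (f : K.Hom x y) :
    K.hcast ex' ey' (K.hcast ex ey f) = K.hcast (ex.trans ex') (ey.trans ey') f := by
  cases ex; cases ey; cases ex'; cases ey'; rfl

theorem cast2_cast2 {x x' x'' : K.Obj} (e : x = x') (e' : x' = x'') (a : K.G2 x) :
    K.cast2 e' (K.cast2 e a) = K.cast2 (e.trans e') a := by
  cases e; cases e'; rfl

theorem hcast_eq_iff {x x' y y' : K.Obj} (ex : x = x') (ey : y = y')
    (f : K.Hom x y) (g : K.Hom x' y') :
    K.hcast ex ey f = g ↔ f = K.hcast ex.symm ey.symm g := by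
  cases ex; cases ey; rfl

theorem hcast_injective {x x' y y' : K.Obj} (ex : x = x') (ey : y = y') :
    Function.Injective (K.hcast ex ey) := by
  cases ex; cases ey; exact fun _ _ h => h

theorem cast2_injective {x x' : K.Obj} (e : x = x') : Function.Injective (K.cast2 e) := by
  cases e; exact fun _ _ h => h

theorem hcast_comp {x y z x' y' z' : K.Obj} (ex : x = x') (ey : y = y') (ez : z = z')
    (g : K.Hom y z) (f : K.Hom x y) :
    K.hcast ex ez (K.comp g f) = K.comp (K.hcast ey ez g) (K.hcast ex ey f) := by
  cases ex; cases ey; cases ez; rfl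

theorem hcast_id {x x' : K.Obj} (e : x = x') : K.hcast e e (K.id x) = K.id x' := by
  cases e; rfl

theorem hcast_comp_D {x y x' y' : K.Obj} (ex : x = x') (ey : y = y') (f : K.Hom x y)
    (c : K.G2 x) :
    K.hcast ex ey (K.comp f (K.D c)) = K.comp (K.hcast ex ey f) (K.D (K.cast2 ex c)) := by
  cases ex; cases ey; rfl

theorem hcast_inv {x y x' y' : K.Obj} (ex : x = x') (ey : y = y') (f : K.Hom x y) :
    K.hcast ey ex (K.inv f) = K.inv (K.hcast ex ey f) := by
  cases ex; cases ey; rfl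

theorem cast2_mul {x x' : K.Obj} (e : x = x') (a b : K.G2 x) :
    K.cast2 e (K.mul a b) = K.mul (K.cast2 e a) (K.cast2 e b) := by
  cases e; rfl

theorem cast2_inv2 {x x' : K.Obj} (e : x = x') (a : K.G2 x) :
    K.cast2 e (K.inv2 a) = K.inv2 (K.cast2 e a) := by
  cases e; rfl

theorem D_cast2 {x x' : K.Obj} (e : x = x') (a : K.G2 x) :
    K.D (K.cast2 e a) = K.hcast e e (K.D a) := by
  cases e; rfl

theorem Ad_hcast {x y x' y' : K.Obj} (ex : x = x') (ey : y = y') (g : K.Hom x y) (a : K.G2 x) :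
    K.Ad (K.hcast ex ey g) (K.cast2 ex a) = K.cast2 ey (K.Ad g a) := by
  cases ex; cases ey; rfl

end CrossedGroupoid

namespace CrossedGroupoidHom

variable {K L : CrossedGroupoid} (Φ : CrossedGroupoidHom K L)

def map2Hom (x : K.Obj) : K.G2 x →* L.G2 (Φ.obj x) :=
  MonoidHom.mk' Φ.map2 Φ.map2_mul

theorem map2_one (x : K.Obj) : Φ.map2 (K.one x) = L.one (Φ.obj x) := map_one (Φ.map2Hom x)

theorem map2_inv2 {x : K.Obj} (a : K.G2 x) : Φ.map2 (K.inv2 a) = L.inv2 (Φ.map2 a) :=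
  map_inv (Φ.map2Hom x) a

theorem map1_inv {x y : K.Obj} (f : K.Hom x y) : Φ.map1 (K.inv f) = L.inv (Φ.map1 f) :=
  L.eq_inv_of_comp_eq_id (by rw [← Φ.map1_comp, K.inv_comp, Φ.map1_id])

theorem map1_hcast {x x' y y' : K.Obj} (ex : x = x') (ey : y = y') (f : K.Hom x y) :
    Φ.map1 (K.hcast ex ey f) =
      L.hcast (congrArg Φ.obj ex) (congrArg Φ.obj ey) (Φ.map1 f) := by
  cases ex; cases ey; rfl

theorem map2_cast2 {x x' : K.Obj} (e : x = x') (a : K.G2 x) :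
    Φ.map2 (K.cast2 e a) = L.cast2 (congrArg Φ.obj e) (Φ.map2 a) := by
  cases e; rfl

theorem obj_congr {Φ Ψ : CrossedGroupoidHom K L} (h : Φ = Ψ) (x : K.Obj) :
    Φ.obj x = Ψ.obj x := by
  cases h; rfl

theorem map1_congr {Φ Ψ : CrossedGroupoidHom K L} (h : Φ = Ψ) {x y : K.Obj} (f : K.Hom x y) :
    Ψ.map1 f = L.hcast (obj_congr h x) (obj_congr h y) (Φ.map1 f) := by
  cases h; rfl

theorem map2_congr {Φ Ψ : CrossedGroupoidHom K L} (h : Φ = Ψ) {x : K.Obj} (a : K.G2 x) :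
    Ψ.map2 a = L.cast2 (obj_congr h x) (Φ.map2 a) := by
  cases h; rfl

end CrossedGroupoidHom

section SimplexCategory

variable {q : ℕ} (i j k : Fin (q + 1)) (hij : i ≤ j) (hjk : j ≤ k)

theorem triMap_comp_edgeMap_01 :
    (triMap i j k hij hjk).comp (edgeMap 0 1 (by decide)) = edgeMap i j hij := by
  ext m; fin_cases m <;> rfl

theorem triMap_comp_edgeMap_12 :
    (triMap i j k hij hjk).comp (edgeMap 1 2 (by decide)) = edgeMap j k hjk := by
  ext m; fin_cases m <;> rfl

theorem triMap_comp_edgeMap_02 :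
    (triMap i j k hij hjk).comp (edgeMap 0 2 (by decide)) = edgeMap i k (hij.trans hjk) := by
  ext m; fin_cases m <;> rfl

end SimplexCategory

namespace CosimplicialCrossedGroupoid

variable (G : CosimplicialCrossedGroupoid)

/-- `push1`, for morphisms between vertex objects over two different base points. -/
def pushHom {x y : (G.obj 0).Obj} {p q : ℕ} (α : Fin (p + 1) →o Fin (q + 1))
    {i j : Fin (p + 1)} (g : (G.obj p).Hom (G.X x p i) (G.X y p j)) :
    (G.obj q).Hom (G.X x q (α i)) (G.X y q (α j)) :=
  (G.obj q).hcast (G.X_push x α i) (G.X_push y α j) ((G.map α).map1 g)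

/-- The paper's f₍ᵢ₎ for a 1-morphism f of G⁰. -/
def vtxHom {y z : (G.obj 0).Obj} (q : ℕ) (i : Fin (q + 1)) (f : (G.obj 0).Hom y z) :
    (G.obj q).Hom (G.X y q i) (G.X z q i) :=
  (G.map (vtxMap i)).map1 f

/-- The paper's e₍ᵢ₎ for a 2-morphism e of G⁰. -/
def vtxG2 {y : (G.obj 0).Obj} (q : ℕ) (i : Fin (q + 1)) (e : (G.obj 0).G2 y) :
    (G.obj q).G2 (G.X y q i) :=
  (G.map (vtxMap i)).map2 e

section Functoriality

variable {p q r : ℕ} (α : Fin (p + 1) →o Fin (q + 1))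

theorem push1_eq_pushHom {x : (G.obj 0).Obj} {i j : Fin (p + 1)}
    (g : (G.obj p).Hom (G.X x p i) (G.X x p j)) : G.push1 α g = G.pushHom α g := rfl

theorem pushHom_comp {x y z : (G.obj 0).Obj} {i j k : Fin (p + 1)}
    (h : (G.obj p).Hom (G.X y p j) (G.X z p k)) (g : (G.obj p).Hom (G.X x p i) (G.X y p j)) :
    G.pushHom α ((G.obj p).comp h g) = (G.obj q).comp (G.pushHom α h) (G.pushHom α g) := by
  rw [pushHom, (G.map α).map1_comp]
  exact (G.obj q).hcast_comp _ _ _ _ _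

theorem pushHom_inv {x y : (G.obj 0).Obj} {i j : Fin (p + 1)}
    (g : (G.obj p).Hom (G.X x p i) (G.X y p j)) :
    G.pushHom α ((G.obj p).inv g) = (G.obj q).inv (G.pushHom α g) := by
  rw [pushHom, (G.map α).map1_inv]
  exact (G.obj q).hcast_inv _ _ _

theorem pushHom_D {x : (G.obj 0).Obj} {i : Fin (p + 1)} (a : (G.obj p).G2 (G.X x p i)) :
    G.pushHom α ((G.obj p).D a) = (G.obj q).D (G.push2 α a) := by
  rw [pushHom, push2, (G.map α).map_D]
  exact ((G.obj q).D_cast2 _ _).symm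

theorem push2_mul {x : (G.obj 0).Obj} {i : Fin (p + 1)} (a b : (G.obj p).G2 (G.X x p i)) :
    G.push2 α ((G.obj p).mul a b) = (G.obj q).mul (G.push2 α a) (G.push2 α b) := by
  rw [push2, (G.map α).map2_mul]
  exact (G.obj q).cast2_mul _ _ _

theorem push2_inv2 {x : (G.obj 0).Obj} {i : Fin (p + 1)} (a : (G.obj p).G2 (G.X x p i)) :
    G.push2 α ((G.obj p).inv2 a) = (G.obj q).inv2 (G.push2 α a) := by
  rw [push2, (G.map α).map2_inv2]
  exact (G.obj q).cast2_inv2 _ _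

theorem push2_Ad {x y : (G.obj 0).Obj} {i j : Fin (p + 1)}
    (g : (G.obj p).Hom (G.X x p i) (G.X y p j)) (a : (G.obj p).G2 (G.X x p i)) :
    G.push2 α ((G.obj p).Ad g a) = (G.obj q).Ad (G.pushHom α g) (G.push2 α a) := by
  rw [push2, pushHom, (G.map α).map_Ad]
  exact ((G.obj q).Ad_hcast _ _ _ _).symm

theorem pushHom_pushHom (β : Fin (q + 1) →o Fin (r + 1)) {x y : (G.obj 0).Obj}
    {i j : Fin (p + 1)} (g : (G.obj p).Hom (G.X x p i) (G.X y p j)) :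
    G.pushHom β (G.pushHom α g) = G.pushHom (β.comp α) g := by
  have h := CrossedGroupoidHom.map1_congr (G.map_comp β α) g
  unfold pushHom
  erw [(G.map β).map1_hcast, (G.obj r).hcast_hcast, h, (G.obj r).hcast_hcast]
  rfl

theorem push2_push2 (β : Fin (q + 1) →o Fin (r + 1)) {x : (G.obj 0).Obj} {i : Fin (p + 1)}
    (a : (G.obj p).G2 (G.X x p i)) :
    G.push2 β (G.push2 α a) = G.push2 (β.comp α) a := by
  have h := CrossedGroupoidHom.map2_congr (G.map_comp β α) a
  unfold push2
  erw [(G.map β).map2_cast2, (G.obj r).cast2_cast2, h, (G.obj r).cast2_cast2]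
  rfl

theorem pushHom_vtxHom (i : Fin (p + 1)) {y z : (G.obj 0).Obj} (f : (G.obj 0).Hom y z) :
    G.pushHom α (G.vtxHom p i f) = G.vtxHom q (α i) f := by
  have h : (G.map α).comp (G.map (vtxMap i)) = G.map (vtxMap (α i)) := by
    rw [← G.map_comp, comp_vtxMap]
  exact (CrossedGroupoidHom.map1_congr h f).symm

theorem push2_vtxG2 (i : Fin (p + 1)) {y : (G.obj 0).Obj} (e : (G.obj 0).G2 y) :
    G.push2 α (G.vtxG2 p i e) = G.vtxG2 q (α i) e := by
  have h : (G.map α).comp (G.map (vtxMap i)) = G.map (vtxMap (α i)) := by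
    rw [← G.map_comp, comp_vtxMap]
  exact (CrossedGroupoidHom.map2_congr h e).symm

theorem vtxHom_comp_D {y z : (G.obj 0).Obj} (i : Fin (q + 1)) (f : (G.obj 0).Hom y z)
    (e : (G.obj 0).G2 y) :
    G.vtxHom q i ((G.obj 0).comp f ((G.obj 0).D e)) =
      (G.obj q).comp (G.vtxHom q i f) ((G.obj q).D (G.vtxG2 q i e)) := by
  rw [vtxHom, (G.map (vtxMap i)).map1_comp, (G.map (vtxMap i)).map_D]
  rfl

theorem push2_congr_map {α β : Fin (p + 1) →o Fin (q + 1)} (hαβ : α = β)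
    {x : (G.obj 0).Obj} {i : Fin (p + 1)} (a : (G.obj p).G2 (G.X x p i)) :
    G.push2 α a = (G.obj q).cast2 (by rw [hαβ]) (G.push2 β a) := by
  cases hαβ; rfl

theorem pushHom_congr_map {α β : Fin (p + 1) →o Fin (q + 1)} (hαβ : α = β)
    {x y : (G.obj 0).Obj} {i j : Fin (p + 1)} (g : (G.obj p).Hom (G.X x p i) (G.X y p j)) :
    G.pushHom α g = (G.obj q).hcast (by rw [hαβ]) (by rw [hαβ]) (G.pushHom β g) := by
  cases hαβ; rfl

end Functoriality

variable {q : ℕ} (i j k : Fin (q + 1)) (hij : i ≤ j) (hjk : j ≤ k)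

theorem push2_triMap_edgeMap_01 {x : (G.obj 0).Obj} (c : (G.obj 1).G2 (G.X x 1 0)) :
    G.push2 (triMap i j k hij hjk) (G.push2 (edgeMap 0 1 (by decide)) c) =
      G.push2 (edgeMap i j hij) c := by
  rw [push2_push2]
  exact G.push2_congr_map (triMap_comp_edgeMap_01 i j k hij hjk) c

theorem push2_triMap_edgeMap_12 {x : (G.obj 0).Obj} (c : (G.obj 1).G2 (G.X x 1 0)) :
    G.push2 (triMap i j k hij hjk) (G.push2 (edgeMap 1 2 (by decide)) c) =
      G.push2 (edgeMap j k hjk) c := by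
  rw [push2_push2]
  exact G.push2_congr_map (triMap_comp_edgeMap_12 i j k hij hjk) c

theorem push2_triMap_edgeMap_02 {x : (G.obj 0).Obj} (c : (G.obj 1).G2 (G.X x 1 0)) :
    G.push2 (triMap i j k hij hjk) (G.push2 (edgeMap 0 2 (by decide)) c) =
      G.push2 (edgeMap i k (hij.trans hjk)) c := by
  rw [push2_push2]
  exact G.push2_congr_map (triMap_comp_edgeMap_02 i j k hij hjk) c

theorem pushHom_triMap_edgeMap_01 {x y : (G.obj 0).Obj}
    (g : (G.obj 1).Hom (G.X x 1 0) (G.X y 1 1)) :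
    G.pushHom (triMap i j k hij hjk) (G.pushHom (edgeMap 0 1 (by decide)) g) =
      G.pushHom (edgeMap i j hij) g := by
  rw [pushHom_pushHom]
  exact G.pushHom_congr_map (triMap_comp_edgeMap_01 i j k hij hjk) g

theorem pushHom_triMap_edgeMap_12 {x y : (G.obj 0).Obj}
    (g : (G.obj 1).Hom (G.X x 1 0) (G.X y 1 1)) :
    G.pushHom (triMap i j k hij hjk) (G.pushHom (edgeMap 1 2 (by decide)) g) =
      G.pushHom (edgeMap j k hjk) g := by
  rw [pushHom_pushHom]
  exact G.pushHom_congr_map (triMap_comp_edgeMap_12 i j k hij hjk) g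

theorem pushHom_triMap_edgeMap_02 {x y : (G.obj 0).Obj}
    (g : (G.obj 1).Hom (G.X x 1 0) (G.X y 1 1)) :
    G.pushHom (triMap i j k hij hjk) (G.pushHom (edgeMap 0 2 (by decide)) g) =
      G.pushHom (edgeMap i k (hij.trans hjk)) g := by
  rw [pushHom_pushHom]
  exact G.pushHom_congr_map (triMap_comp_edgeMap_02 i j k hij hjk) g

end CosimplicialCrossedGroupoid

namespace CrossedGroupoid

variable (K : CrossedGroupoid)

/-- The failure of (g₀₁, g₁₂, g₀₂) to be a 1-cocycle. -/
def cocycleDefect {x0 x1 x2 : K.Obj} (g01 : K.Hom x0 x1) (g12 : K.Hom x1 x2)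
    (g02 : K.Hom x0 x2) : K.Hom x0 x0 :=
  K.comp (K.comp (K.inv g02) g12) g01

/-- The formula for g' in a gauge transformation (Definition 1.7), on one edge. -/
def gaugeHom {x0 x1 z0 z1 : K.Obj} (f0 : K.Hom x0 z0) (f1 : K.Hom x1 z1) (g : K.Hom x0 x1)
    (c : K.G2 x0) : K.Hom z0 z1 :=
  K.comp (K.comp (K.comp f1 g) (K.D c)) (K.inv f0)

/-- The formula for a' in a gauge transformation (Definition 1.7), on one triangle. -/
def gaugeG2 {x0 x1 z0 : K.Obj} (f0 : K.Hom x0 z0) (g01 : K.Hom x0 x1) (c02 a : K.G2 x0)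
    (c12 : K.G2 x1) (c01 : K.G2 x0) : K.G2 z0 :=
  K.Ad f0 (K.mul (K.mul (K.mul (K.inv2 c02) a) (K.Ad (K.inv g01) c12)) c01)

/-- The `c'` for which (f₀ ∘ D e₀, f₁ ∘ D e₁, c') acts on the edge `g` as (f₀, f₁, c) does. -/
def gaugeShift {x0 x1 : K.Obj} (g : K.Hom x0 x1) (c e0 : K.G2 x0) (e1 : K.G2 x1) : K.G2 x0 :=
  K.mul (K.mul (K.inv2 (K.Ad (K.inv g) e1)) c) e0

theorem eq_gaugeHom_iff {x0 x1 z0 z1 : K.Obj} {f0 : K.Hom x0 z0} {f1 : K.Hom x1 z1}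
    {g : K.Hom x0 x1} {c : K.G2 x0} {g' : K.Hom z0 z1} :
    g' = K.gaugeHom f0 f1 g c ↔ K.comp (K.inv f1) (K.comp g' f0) = K.comp g (K.D c) := by
  constructor
  · rintro rfl
    simp only [gaugeHom, K.comp_assoc, K.inv_comp, K.comp_id, K.inv_comp_cancel_left]
  · intro h
    rw [gaugeHom, K.comp_assoc, K.comp_assoc, ← K.comp_assoc g, ← h]
    simp only [K.comp_assoc, K.comp_inv_cancel_left, K.comp_inv, K.comp_id]

theorem cocycleDefect_gaugeHom {x0 x1 x2 z0 z1 z2 : K.Obj}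
    {g01 : K.Hom x0 x1} {g12 : K.Hom x1 x2} {g02 : K.Hom x0 x2} {b : K.G2 x0}
    (hb : K.cocycleDefect g01 g12 g02 = K.D b)
    (f0 : K.Hom x0 z0) (f1 : K.Hom x1 z1) (f2 : K.Hom x2 z2) (c01 c02 : K.G2 x0) (c12 : K.G2 x1) :
    K.cocycleDefect (K.gaugeHom f0 f1 g01 c01) (K.gaugeHom f1 f2 g12 c12)
        (K.gaugeHom f0 f2 g02 c02) =
      K.D (K.gaugeG2 f0 g01 c02 b c12 c01) := by
  rw [cocycleDefect] at hb
  simp only [cocycleDefect, gaugeHom, gaugeG2, K.D_Ad, K.D_mul, K.D_inv2, ← hb, K.inv_comp_rev,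
    K.inv_inv, K.comp_assoc, K.inv_comp_cancel_left, K.comp_inv_cancel_left]

theorem Ad_inv_comp_of_cocycleDefect {x0 x1 x2 : K.Obj}
    {g01 : K.Hom x0 x1} {g12 : K.Hom x1 x2} {g02 : K.Hom x0 x2} {b : K.G2 x0}
    (hb : K.cocycleDefect g01 g12 g02 = K.D b) (u : K.G2 x2) :
    K.Ad (K.inv (K.D b)) (K.Ad (K.inv g02) u) = K.Ad (K.inv g01) (K.Ad (K.inv g12) u) := by
  have hg : K.comp g02 (K.D b) = K.comp g12 g01 := by
    rw [← hb, cocycleDefect, K.comp_assoc, K.comp_inv_cancel_left]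
  rw [← K.Ad_comp, ← K.inv_comp_rev, hg, K.inv_comp_rev, K.Ad_comp]

theorem twisted_cocycle_gauge_inner {x0 x1 x2 : K.Obj}
    {g01 : K.Hom x0 x1} {g12 : K.Hom x1 x2} {g02 : K.Hom x0 x2}
    {b013 b023 b012 : K.G2 x0} {b123 : K.G2 x1}
    (hb012 : K.cocycleDefect g01 g12 g02 = K.D b012)
    (hcoc : K.mul (K.mul (K.inv2 b013) b023) b012 = K.Ad (K.inv g01) b123)
    (c01 c02 c03 : K.G2 x0) (c12 c13 : K.G2 x1) (c23 : K.G2 x2) :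
    K.mul (K.mul
        (K.inv2 (K.mul (K.mul (K.mul (K.inv2 c03) b013) (K.Ad (K.inv g01) c13)) c01))
        (K.mul (K.mul (K.mul (K.inv2 c03) b023) (K.Ad (K.inv g02) c23)) c02))
      (K.mul (K.mul (K.mul (K.inv2 c02) b012) (K.Ad (K.inv g01) c12)) c01)
    = K.mul (K.inv2 c01) (K.mul (K.Ad (K.inv g01)
        (K.mul (K.mul (K.mul (K.inv2 c13) b123) (K.Ad (K.inv g12) c23)) c12)) c01) := by
  have hcoc' : ∀ t : K.G2 x0, K.mul (K.inv2 b013) (K.mul b023 (K.mul b012 t)) =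
      K.mul (K.Ad (K.inv g01) b123) t := by
    intro t
    rw [← hcoc, K.mul_assoc, K.mul_assoc]
  simp only [K.inv2_mul_rev, K.inv2_inv2, K.Ad_mul, K.Ad_inv2, K.mul_assoc,
    K.mul_inv2_cancel_left]
  rw [← K.mul_assoc (K.Ad (K.inv g02) c23) b012, K.mul_eq_mul_Ad_D_inv b012,
    K.Ad_inv_comp_of_cocycleDefect hb012, K.mul_assoc, hcoc']

theorem twisted_cocycle_gaugeG2 {x0 x1 x2 z0 z1 : K.Obj}
    {g01 : K.Hom x0 x1} {g12 : K.Hom x1 x2} {g02 : K.Hom x0 x2}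
    {b013 b023 b012 : K.G2 x0} {b123 : K.G2 x1}
    (hb012 : K.cocycleDefect g01 g12 g02 = K.D b012)
    (hcoc : K.mul (K.mul (K.inv2 b013) b023) b012 = K.Ad (K.inv g01) b123)
    (f0 : K.Hom x0 z0) (f1 : K.Hom x1 z1)
    (c01 c02 c03 : K.G2 x0) (c12 c13 : K.G2 x1) (c23 : K.G2 x2) :
    K.mul (K.mul (K.inv2 (K.gaugeG2 f0 g01 c03 b013 c13 c01)) (K.gaugeG2 f0 g02 c03 b023 c23 c02))
        (K.gaugeG2 f0 g01 c02 b012 c12 c01) =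
      K.Ad (K.inv (K.gaugeHom f0 f1 g01 c01)) (K.gaugeG2 f1 g12 c13 b123 c23 c12) := by
  simp only [gaugeG2, gaugeHom]
  rw [← K.Ad_inv2, ← K.Ad_mul, ← K.Ad_mul,
    K.twisted_cocycle_gauge_inner hb012 hcoc c01 c02 c03 c12 c13 c23]
  simp only [K.inv_comp_rev, K.inv_inv, K.Ad_comp]
  rw [← K.Ad_comp (K.inv f1) f1, K.inv_comp, K.Ad_id, K.Ad_D_inv]

theorem D_twisted_cocycle {x0 x1 x2 x3 : K.Obj}
    {g01 : K.Hom x0 x1} {g02 : K.Hom x0 x2} {g03 : K.Hom x0 x3}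
    {g12 : K.Hom x1 x2} {g13 : K.Hom x1 x3} {g23 : K.Hom x2 x3}
    {a013 a023 a012 : K.G2 x0} {a123 : K.G2 x1}
    (h013 : K.cocycleDefect g01 g13 g03 = K.D a013)
    (h023 : K.cocycleDefect g02 g23 g03 = K.D a023)
    (h012 : K.cocycleDefect g01 g12 g02 = K.D a012)
    (h123 : K.cocycleDefect g12 g23 g13 = K.D a123) :
    K.D (K.mul (K.mul (K.inv2 a013) a023) a012) = K.D (K.Ad (K.inv g01) a123) := by
  simp only [K.D_mul, K.D_inv2, K.D_Ad, ← h013, ← h023, ← h012, ← h123, cocycleDefect,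
    K.inv_comp_rev, K.inv_inv, K.comp_assoc, K.comp_inv_cancel_left]

theorem gaugeHom_comp_D {x0 x1 z0 z1 : K.Obj} (f0 : K.Hom x0 z0) (f1 : K.Hom x1 z1)
    (g : K.Hom x0 x1) (c e0 : K.G2 x0) (e1 : K.G2 x1) :
    K.gaugeHom (K.comp f0 (K.D e0)) (K.comp f1 (K.D e1)) g (K.gaugeShift g c e0 e1) =
      K.gaugeHom f0 f1 g c := by
  simp only [gaugeHom, gaugeShift, K.D_mul, K.D_inv2, K.D_Ad, K.inv_comp_rev, K.inv_inv,
    K.comp_assoc, K.comp_inv_cancel_left]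

theorem gaugeG2_comp_D {x0 x1 x2 z0 : K.Obj}
    {g01 : K.Hom x0 x1} {g12 : K.Hom x1 x2} {g02 : K.Hom x0 x2} {a : K.G2 x0}
    (ha : K.cocycleDefect g01 g12 g02 = K.D a) (f0 : K.Hom x0 z0)
    (c01 c02 : K.G2 x0) (c12 : K.G2 x1) (e0 : K.G2 x0) (e1 : K.G2 x1) (e2 : K.G2 x2) :
    K.gaugeG2 (K.comp f0 (K.D e0)) g01 (K.gaugeShift g02 c02 e0 e2) a
        (K.gaugeShift g12 c12 e1 e2) (K.gaugeShift g01 c01 e0 e1) =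
      K.gaugeG2 f0 g01 c02 a c12 c01 := by
  have hcomm : K.mul (K.Ad (K.inv g02) e2) a =
      K.mul a (K.Ad (K.inv g01) (K.Ad (K.inv g12) e2)) := by
    rw [K.mul_eq_mul_Ad_D_inv a, K.Ad_inv_comp_of_cocycleDefect ha]
  simp only [gaugeG2, gaugeShift, K.Ad_comp, K.peiffer]
  congr 1
  simp only [K.inv2_mul_rev, K.inv2_inv2, K.Ad_mul, K.Ad_inv2, K.mul_assoc,
    K.mul_inv2_cancel_left]
  rw [← K.mul_assoc (K.Ad (K.inv g02) e2) a, hcomm]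
  simp only [K.mul_assoc, K.mul_inv2_cancel_left, K.mul_inv2, K.mul_one]

theorem eq_gaugeHom_of_comp_eq_comp_D {x0 x1 z0 z1 : K.Obj} {f0 : K.Hom x0 z0}
    {f1 : K.Hom x1 z1} {h : K.Hom x0 x1} {g : K.Hom z0 z1} {c : K.G2 z0}
    (hg : K.comp (K.comp f1 h) (K.inv f0) = K.comp g (K.D c)) :
    g = K.gaugeHom f0 f1 h (K.inv2 (K.Ad (K.inv f0) c)) := by
  have : g = K.comp (K.comp (K.comp f1 h) (K.inv f0)) (K.inv (K.D c)) := by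
    rw [hg, K.comp_assoc, K.comp_inv, K.comp_id]
  rw [this]
  simp only [gaugeHom, K.D_inv2, K.D_Ad, K.inv_comp_rev, K.inv_inv, K.comp_assoc, K.comp_inv,
    K.comp_id]

end CrossedGroupoid

namespace CosimplicialCrossedGroupoid

open CrossedGroupoid

variable (G : CosimplicialCrossedGroupoid)

/-- The g' of a gauge transformation; `transportA` is its a'. -/
def gaugeG {x x' : (G.obj 0).Obj} (f : (G.obj 0).Hom x x')
    (g : (G.obj 1).Hom (G.X x 1 0) (G.X x 1 1)) (c : (G.obj 1).G2 (G.X x 1 0)) :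
    (G.obj 1).Hom (G.X x' 1 0) (G.X x' 1 1) :=
  (G.obj 1).gaugeHom (G.vtxHom 1 0 f) (G.vtxHom 1 1 f) g c

def defect {x : (G.obj 0).Obj} (g : (G.obj 1).Hom (G.X x 1 0) (G.X x 1 1)) :
    (G.obj 2).Hom (G.X x 2 0) (G.X x 2 0) :=
  (G.obj 2).cocycleDefect (G.pushHom (edgeMap 0 1 (by decide)) g)
    (G.pushHom (edgeMap 1 2 (by decide)) g) (G.pushHom (edgeMap 0 2 (by decide)) g)

def twistedLhs {x : (G.obj 0).Obj} (a : (G.obj 2).G2 (G.X x 2 0)) : (G.obj 3).G2 (G.X x 3 0) :=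
  (G.obj 3).mul ((G.obj 3).mul
      ((G.obj 3).inv2 (G.push2 (triMap 0 1 3 (by decide) (by decide)) a))
      (G.push2 (triMap 0 2 3 (by decide) (by decide)) a))
    (G.push2 (triMap 0 1 2 (by decide) (by decide)) a)

def twistedRhs {x : (G.obj 0).Obj} (g : (G.obj 1).Hom (G.X x 1 0) (G.X x 1 1))
    (a : (G.obj 2).G2 (G.X x 2 0)) : (G.obj 3).G2 (G.X x 3 0) :=
  (G.obj 3).Ad ((G.obj 3).inv (G.pushHom (edgeMap 0 1 (by decide)) g))
    (G.push2 (triMap 1 2 3 (by decide) (by decide)) a)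

variable {G}

theorem isDescent_iff {x : (G.obj 0).Obj} {g : (G.obj 1).Hom (G.X x 1 0) (G.X x 1 1)}
    {a : (G.obj 2).G2 (G.X x 2 0)} :
    G.IsDescent x g a ↔ G.defect g = (G.obj 2).D a ∧ G.twistedLhs a = G.twistedRhs g a :=
  Iff.rfl

theorem isGauge_iff {x x' : (G.obj 0).Obj} {g : (G.obj 1).Hom (G.X x 1 0) (G.X x 1 1)}
    {a : (G.obj 2).G2 (G.X x 2 0)} {g' : (G.obj 1).Hom (G.X x' 1 0) (G.X x' 1 1)}
    {a' : (G.obj 2).G2 (G.X x' 2 0)} {f : (G.obj 0).Hom x x'} {c : (G.obj 1).G2 (G.X x 1 0)} :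
    G.IsGauge x g a x' g' a' f c ↔ g' = G.gaugeG f g c ∧ a' = G.transportA f g a c :=
  Iff.rfl

theorem transportA_eq {x x' : (G.obj 0).Obj} (f : (G.obj 0).Hom x x')
    (g : (G.obj 1).Hom (G.X x 1 0) (G.X x 1 1)) (a : (G.obj 2).G2 (G.X x 2 0))
    (c : (G.obj 1).G2 (G.X x 1 0)) :
    G.transportA f g a c =
      (G.obj 2).gaugeG2 (G.vtxHom 2 0 f) (G.pushHom (edgeMap 0 1 (by decide)) g)
        (G.push2 (edgeMap 0 2 (by decide)) c) a (G.push2 (edgeMap 1 2 (by decide)) c)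
        (G.push2 (edgeMap 0 1 (by decide)) c) :=
  rfl

variable (G) {q : ℕ} (i j k : Fin (q + 1)) (hij : i ≤ j) (hjk : j ≤ k)

theorem pushHom_gaugeG {x x' : (G.obj 0).Obj} (f : (G.obj 0).Hom x x')
    (g : (G.obj 1).Hom (G.X x 1 0) (G.X x 1 1)) (c : (G.obj 1).G2 (G.X x 1 0)) :
    G.pushHom (edgeMap i j hij) (G.gaugeG f g c) =
      (G.obj q).gaugeHom (G.vtxHom q i f) (G.vtxHom q j f) (G.pushHom (edgeMap i j hij) g)
        (G.push2 (edgeMap i j hij) c) := by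
  rw [gaugeG, gaugeHom, G.pushHom_comp, G.pushHom_comp, G.pushHom_comp, G.pushHom_inv,
    G.pushHom_D, G.pushHom_vtxHom, G.pushHom_vtxHom]
  rfl

theorem push2_transportA {x x' : (G.obj 0).Obj} (f : (G.obj 0).Hom x x')
    (g : (G.obj 1).Hom (G.X x 1 0) (G.X x 1 1)) (a : (G.obj 2).G2 (G.X x 2 0))
    (c : (G.obj 1).G2 (G.X x 1 0)) :
    G.push2 (triMap i j k hij hjk) (G.transportA f g a c) =
      (G.obj q).gaugeG2 (G.vtxHom q i f) (G.pushHom (edgeMap i j hij) g)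
        (G.push2 (edgeMap i k (hij.trans hjk)) c) (G.push2 (triMap i j k hij hjk) a)
        (G.push2 (edgeMap j k hjk) c) (G.push2 (edgeMap i j hij) c) := by
  erw [transportA, G.push2_Ad, G.push2_mul, G.push2_mul, G.push2_mul, G.push2_inv2,
    G.push2_Ad, G.pushHom_inv, G.pushHom_vtxHom, G.push2_triMap_edgeMap_01,
    G.push2_triMap_edgeMap_02, G.push2_triMap_edgeMap_12, G.pushHom_triMap_edgeMap_01]
  rfl

theorem cocycleDefect_pushHom_triMap {x : (G.obj 0).Obj}
    {g : (G.obj 1).Hom (G.X x 1 0) (G.X x 1 1)} {a : (G.obj 2).G2 (G.X x 2 0)}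
    (h : G.defect g = (G.obj 2).D a) :
    (G.obj q).cocycleDefect (G.pushHom (edgeMap i j hij) g) (G.pushHom (edgeMap j k hjk) g)
        (G.pushHom (edgeMap i k (hij.trans hjk)) g) =
      (G.obj q).D (G.push2 (triMap i j k hij hjk) a) := by
  have h' := congrArg (G.pushHom (triMap i j k hij hjk)) h
  unfold defect cocycleDefect at h'
  erw [G.pushHom_comp, G.pushHom_comp, G.pushHom_inv, G.pushHom_D,
    G.pushHom_triMap_edgeMap_01, G.pushHom_triMap_edgeMap_12,
    G.pushHom_triMap_edgeMap_02] at h'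
  exact h'

theorem D_twistedLhs_eq_D_twistedRhs {x : (G.obj 0).Obj}
    {g : (G.obj 1).Hom (G.X x 1 0) (G.X x 1 1)} {a : (G.obj 2).G2 (G.X x 2 0)}
    (h : G.defect g = (G.obj 2).D a) :
    (G.obj 3).D (G.twistedLhs a) = (G.obj 3).D (G.twistedRhs g a) :=
  (G.obj 3).D_twisted_cocycle (G.cocycleDefect_pushHom_triMap 0 1 3 (by decide) (by decide) h)
    (G.cocycleDefect_pushHom_triMap 0 2 3 (by decide) (by decide) h)
    (G.cocycleDefect_pushHom_triMap 0 1 2 (by decide) (by decide) h)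
    (G.cocycleDefect_pushHom_triMap 1 2 3 (by decide) (by decide) h)

theorem isDescent_gauge {x x' : (G.obj 0).Obj} (f : (G.obj 0).Hom x x')
    {g : (G.obj 1).Hom (G.X x 1 0) (G.X x 1 1)} {a : (G.obj 2).G2 (G.X x 2 0)}
    (c : (G.obj 1).G2 (G.X x 1 0)) (hd : G.IsDescent x g a) :
    G.IsDescent x' (G.gaugeG f g c) (G.transportA f g a c) := by
  rw [isDescent_iff] at hd ⊢
  constructor
  · rw [defect, G.pushHom_gaugeG, G.pushHom_gaugeG, G.pushHom_gaugeG]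
    exact (G.obj 2).cocycleDefect_gaugeHom hd.1 _ _ _ _ _ _
  · erw [twistedLhs, twistedRhs, G.push2_transportA, G.push2_transportA, G.push2_transportA,
      G.push2_transportA, G.pushHom_gaugeG]
    exact (G.obj 3).twisted_cocycle_gaugeG2
      (G.cocycleDefect_pushHom_triMap 0 1 2 (by decide) (by decide) hd.1) hd.2 _ _ _ _ _ _ _ _

end CosimplicialCrossedGroupoid

namespace CosimplicialCrossedGroupoid

open CrossedGroupoid

variable (G : CosimplicialCrossedGroupoid)

theorem push2_gaugeShift {q : ℕ} (i j : Fin (q + 1)) (hij : i ≤ j) {x : (G.obj 0).Obj}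
    (h : (G.obj 1).Hom (G.X x 1 0) (G.X x 1 1)) (c : (G.obj 1).G2 (G.X x 1 0))
    (e : (G.obj 0).G2 x) :
    G.push2 (edgeMap i j hij) ((G.obj 1).gaugeShift h c (G.vtxG2 1 0 e) (G.vtxG2 1 1 e)) =
      (G.obj q).gaugeShift (G.pushHom (edgeMap i j hij) h) (G.push2 (edgeMap i j hij) c)
        (G.vtxG2 q i e) (G.vtxG2 q j e) := by
  rw [gaugeShift, G.push2_mul, G.push2_mul, G.push2_inv2, G.push2_Ad, G.pushHom_inv,
    G.push2_vtxG2, G.push2_vtxG2]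
  rfl

variable {G}

theorem isGauge_comp_D {y y' : (G.obj 0).Obj}
    {h : (G.obj 1).Hom (G.X y 1 0) (G.X y 1 1)} {b : (G.obj 2).G2 (G.X y 2 0)}
    {g' : (G.obj 1).Hom (G.X y' 1 0) (G.X y' 1 1)} {a' : (G.obj 2).G2 (G.X y' 2 0)}
    {f : (G.obj 0).Hom y y'} {c : (G.obj 1).G2 (G.X y 1 0)}
    (hb : G.defect h = (G.obj 2).D b) (hg : G.IsGauge y h b y' g' a' f c) (e : (G.obj 0).G2 y) :
    G.IsGauge y h b y' g' a' ((G.obj 0).comp f ((G.obj 0).D e))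
      ((G.obj 1).gaugeShift h c (G.vtxG2 1 0 e) (G.vtxG2 1 1 e)) := by
  rw [isGauge_iff] at hg ⊢
  constructor
  · rw [hg.1, gaugeG, gaugeG, G.vtxHom_comp_D, G.vtxHom_comp_D, gaugeHom_comp_D]
  · rw [hg.2, transportA_eq, transportA_eq, G.vtxHom_comp_D]
    erw [G.push2_gaugeShift, G.push2_gaugeShift, G.push2_gaugeShift]
    exact ((G.obj 2).gaugeG2_comp_D hb _ _ _ _ _ _ _).symm

end CosimplicialCrossedGroupoid

namespace CosimplicialMor

open CosimplicialCrossedGroupoid CrossedGroupoid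

variable {G H : CosimplicialCrossedGroupoid} (F : CosimplicialMor G H)

/-- `F` on 1-morphisms between vertex objects; `mapG` is the case p = 1. -/
def mapHom (p : ℕ) {x y : (G.obj 0).Obj} {i j : Fin (p + 1)}
    (g : (G.obj p).Hom (G.X x p i) (G.X y p j)) :
    (H.obj p).Hom (H.X (F.objD x) p i) (H.X (F.objD y) p j) :=
  (H.obj p).hcast (F.app_X x p i) (F.app_X y p j) ((F.app p).map1 g)

/-- `F` on 2-morphisms at vertex objects; `mapC` and `mapA` are the cases p = 1, 2. -/
def mapG2 (p : ℕ) {x : (G.obj 0).Obj} {i : Fin (p + 1)} (a : (G.obj p).G2 (G.X x p i)) :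
    (H.obj p).G2 (H.X (F.objD x) p i) :=
  (H.obj p).cast2 (F.app_X x p i) ((F.app p).map2 a)

variable (p : ℕ)

theorem mapHom_comp {x y z : (G.obj 0).Obj} {i j k : Fin (p + 1)}
    (h : (G.obj p).Hom (G.X y p j) (G.X z p k)) (g : (G.obj p).Hom (G.X x p i) (G.X y p j)) :
    F.mapHom p ((G.obj p).comp h g) = (H.obj p).comp (F.mapHom p h) (F.mapHom p g) := by
  rw [mapHom, (F.app p).map1_comp]
  exact (H.obj p).hcast_comp _ _ _ _ _

theorem mapHom_inv {x y : (G.obj 0).Obj} {i j : Fin (p + 1)}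
    (g : (G.obj p).Hom (G.X x p i) (G.X y p j)) :
    F.mapHom p ((G.obj p).inv g) = (H.obj p).inv (F.mapHom p g) := by
  rw [mapHom, (F.app p).map1_inv]
  exact (H.obj p).hcast_inv _ _ _

theorem mapHom_D {x : (G.obj 0).Obj} {i : Fin (p + 1)} (a : (G.obj p).G2 (G.X x p i)) :
    F.mapHom p ((G.obj p).D a) = (H.obj p).D (F.mapG2 p a) := by
  rw [mapHom, mapG2, (F.app p).map_D]
  exact ((H.obj p).D_cast2 _ _).symm

theorem mapG2_mul {x : (G.obj 0).Obj} {i : Fin (p + 1)} (a b : (G.obj p).G2 (G.X x p i)) :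
    F.mapG2 p ((G.obj p).mul a b) = (H.obj p).mul (F.mapG2 p a) (F.mapG2 p b) := by
  rw [mapG2, (F.app p).map2_mul]
  exact (H.obj p).cast2_mul _ _ _

theorem mapG2_inv2 {x : (G.obj 0).Obj} {i : Fin (p + 1)} (a : (G.obj p).G2 (G.X x p i)) :
    F.mapG2 p ((G.obj p).inv2 a) = (H.obj p).inv2 (F.mapG2 p a) := by
  rw [mapG2, (F.app p).map2_inv2]
  exact (H.obj p).cast2_inv2 _ _

theorem mapG2_Ad {x y : (G.obj 0).Obj} {i j : Fin (p + 1)}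
    (g : (G.obj p).Hom (G.X x p i) (G.X y p j)) (a : (G.obj p).G2 (G.X x p i)) :
    F.mapG2 p ((G.obj p).Ad g a) = (H.obj p).Ad (F.mapHom p g) (F.mapG2 p a) := by
  rw [mapHom, mapG2, (F.app p).map_Ad]
  exact ((H.obj p).Ad_hcast _ _ _ _).symm

theorem mapHom_id {x : (G.obj 0).Obj} (i : Fin (p + 1)) :
    F.mapHom p ((G.obj p).id (G.X x p i)) = (H.obj p).id (H.X (F.objD x) p i) := by
  rw [mapHom, (F.app p).map1_id]
  exact (H.obj p).hcast_id _

theorem mapHom_vtxHom (i : Fin (p + 1)) {x y : (G.obj 0).Obj} (f : (G.obj 0).Hom x y) :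
    F.mapHom p (G.vtxHom p i f) = H.vtxHom p i (F.mapF f) :=
  (CrossedGroupoidHom.map1_congr (F.naturality (vtxMap i)) f).symm

theorem mapG2_gaugeG2 {x y z : (G.obj 0).Obj} {i j : Fin (p + 1)}
    (f0 : (G.obj p).Hom (G.X x p i) (G.X z p i)) (g : (G.obj p).Hom (G.X x p i) (G.X y p j))
    (c02 a : (G.obj p).G2 (G.X x p i)) (c12 : (G.obj p).G2 (G.X y p j))
    (c01 : (G.obj p).G2 (G.X x p i)) :
    F.mapG2 p ((G.obj p).gaugeG2 f0 g c02 a c12 c01) =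
      (H.obj p).gaugeG2 (F.mapHom p f0) (F.mapHom p g) (F.mapG2 p c02) (F.mapG2 p a)
        (F.mapG2 p c12) (F.mapG2 p c01) := by
  rw [gaugeG2, gaugeG2, F.mapG2_Ad, F.mapG2_mul, F.mapG2_mul, F.mapG2_mul, F.mapG2_inv2,
    F.mapG2_Ad, F.mapHom_inv]

variable {p} (q : ℕ) (α : Fin (p + 1) →o Fin (q + 1))

theorem mapHom_pushHom {x y : (G.obj 0).Obj} {i j : Fin (p + 1)}
    (g : (G.obj p).Hom (G.X x p i) (G.X y p j)) :
    F.mapHom q (G.pushHom α g) = H.pushHom α (F.mapHom p g) := by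
  have h := CrossedGroupoidHom.map1_congr (F.naturality α) g
  unfold mapHom pushHom
  erw [(F.app q).map1_hcast, (H.map α).map1_hcast, (H.obj q).hcast_hcast,
    (H.obj q).hcast_hcast, h, (H.obj q).hcast_hcast]
  rfl

theorem mapG2_push2 {x : (G.obj 0).Obj} {i : Fin (p + 1)} (a : (G.obj p).G2 (G.X x p i)) :
    F.mapG2 q (G.push2 α a) = H.push2 α (F.mapG2 p a) := by
  have h := CrossedGroupoidHom.map2_congr (F.naturality α) a
  unfold mapG2 push2
  erw [(F.app q).map2_cast2, (H.map α).map2_cast2, (H.obj q).cast2_cast2,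
    (H.obj q).cast2_cast2, h, (H.obj q).cast2_cast2]
  rfl

variable {x : (G.obj 0).Obj}

theorem mapHom_defect (g : (G.obj 1).Hom (G.X x 1 0) (G.X x 1 1)) :
    F.mapHom 2 (G.defect g) = H.defect (F.mapG g) := by
  erw [defect, cocycleDefect, F.mapHom_comp, F.mapHom_comp, F.mapHom_inv, F.mapHom_pushHom,
    F.mapHom_pushHom, F.mapHom_pushHom]
  rfl

theorem mapG2_twistedLhs (a : (G.obj 2).G2 (G.X x 2 0)) :
    F.mapG2 3 (G.twistedLhs a) = H.twistedLhs (F.mapA a) := by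
  erw [twistedLhs, F.mapG2_mul, F.mapG2_mul, F.mapG2_inv2, F.mapG2_push2, F.mapG2_push2,
    F.mapG2_push2]
  rfl

theorem mapG2_twistedRhs (g : (G.obj 1).Hom (G.X x 1 0) (G.X x 1 1))
    (a : (G.obj 2).G2 (G.X x 2 0)) :
    F.mapG2 3 (G.twistedRhs g a) = H.twistedRhs (F.mapG g) (F.mapA a) := by
  erw [twistedRhs, F.mapG2_Ad, F.mapHom_inv, F.mapHom_pushHom, F.mapG2_push2]
  rfl

theorem map_isDescent {g : (G.obj 1).Hom (G.X x 1 0) (G.X x 1 1)}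
    {a : (G.obj 2).G2 (G.X x 2 0)} (hd : G.IsDescent x g a) :
    H.IsDescent (F.objD x) (F.mapG g) (F.mapA a) := by
  rw [isDescent_iff] at hd ⊢
  rw [← F.mapHom_defect, ← F.mapG2_twistedLhs, ← F.mapG2_twistedRhs, hd.1, hd.2, F.mapHom_D]
  exact ⟨rfl, rfl⟩

theorem mapA_transportA {x' : (G.obj 0).Obj} (f : (G.obj 0).Hom x x')
    (g : (G.obj 1).Hom (G.X x 1 0) (G.X x 1 1)) (a : (G.obj 2).G2 (G.X x 2 0))
    (c : (G.obj 1).G2 (G.X x 1 0)) :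
    F.mapA (G.transportA f g a c) =
      H.transportA (F.mapF f) (F.mapG g) (F.mapA a) (F.mapC c) := by
  rw [transportA_eq, transportA_eq]
  refine (F.mapG2_gaugeG2 2 _ _ _ _ _ _).trans ?_
  erw [F.mapHom_vtxHom, F.mapHom_pushHom, F.mapG2_push2, F.mapG2_push2, F.mapG2_push2]
  rfl

end CosimplicialMor

namespace CrossedGroupoidHom

variable {K L : CrossedGroupoid} {Φ : CrossedGroupoidHom K L}

theorem pi0Rel_equivalence (K : CrossedGroupoid) : Equivalence K.pi0Rel where
  refl x := ⟨K.id x⟩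
  symm h := ⟨K.inv h.some⟩
  trans h h' := ⟨K.comp h'.some h.some⟩

theorem homRel_equivalence (K : CrossedGroupoid) (x x' : K.Obj) :
    Equivalence (K.homRel x x') where
  refl g := ⟨K.one x, by rw [K.D_one, K.comp_id]⟩
  symm := by
    rintro g g' ⟨c, rfl⟩
    exact ⟨K.inv2 c, by rw [K.D_inv2, K.comp_assoc, K.comp_inv, K.comp_id]⟩
  trans := by
    rintro g g' g'' ⟨c, rfl⟩ ⟨c', rfl⟩
    exact ⟨K.mul c c', by rw [K.D_mul, K.comp_assoc]⟩

theorem pi0Rel_of_mk_eq {x y : K.Obj} (h : Quot.mk K.pi0Rel x = Quot.mk K.pi0Rel y) :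
    K.pi0Rel x y :=
  (pi0Rel_equivalence K).eqvGen_iff.mp (Quot.eq.mp h)

theorem homRel_of_mk_eq {x x' : K.Obj} {g g' : K.Hom x x'}
    (h : Quot.mk (K.homRel x x') g = Quot.mk (K.homRel x x') g') : K.homRel x x' g g' :=
  (homRel_equivalence K x x').eqvGen_iff.mp (Quot.eq.mp h)

namespace IsWeakEquiv

variable (hΦ : Φ.IsWeakEquiv)
include hΦ

theorem exists_hom_to_obj (y : L.Obj) : ∃ x : K.Obj, Nonempty (L.Hom y (Φ.obj x)) := by
  obtain ⟨q, hq⟩ := hΦ.1.2 (Quot.mk _ y)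
  obtain ⟨x, rfl⟩ := Quot.exists_rep q
  exact ⟨x, ⟨L.inv (pi0Rel_of_mk_eq hq).some⟩⟩

/-- π₀-injectivity provides some `k : x → x'`, and π₁-surjectivity lifts `Φ(k)⁻¹ ∘ h`. -/
theorem exists_eq_map1_comp_D {x x' : K.Obj} (h : L.Hom (Φ.obj x) (Φ.obj x')) :
    ∃ (g : K.Hom x x') (c : L.G2 (Φ.obj x)), h = L.comp (Φ.map1 g) (L.D c) := by
  obtain ⟨k⟩ := pi0Rel_of_mk_eq (hΦ.1.1 (Quot.sound ⟨h⟩ : Quot.mk L.pi0Rel _ = Quot.mk _ _))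
  obtain ⟨q, hq⟩ := (hΦ.2.1 x).2 (Quot.mk _ (L.comp (L.inv (Φ.map1 k)) h))
  obtain ⟨v, rfl⟩ := Quot.exists_rep q
  obtain ⟨c, hc⟩ := homRel_of_mk_eq hq
  refine ⟨K.comp k v, c, ?_⟩
  rw [Φ.map1_comp, L.comp_assoc, ← hc, L.comp_inv_cancel_left]

theorem eq_of_D_eq_of_map2_eq {x : K.Obj} {a a' : K.G2 x} (hD : K.D a = K.D a')
    (h : Φ.map2 a = Φ.map2 a') : a = a' := by
  have hker : K.D (K.mul (K.inv2 a) a') = K.id x := by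
    rw [K.D_mul, K.D_inv2, hD, K.inv_comp]
  have hone : (⟨K.mul (K.inv2 a) a', hker⟩ : K.pi2 x) = ⟨K.one x, K.D_one x⟩ := by
    apply (hΦ.2.2 x).1
    apply Subtype.ext
    change Φ.map2 (K.mul (K.inv2 a) a') = Φ.map2 (K.one x)
    rw [Φ.map2_mul, Φ.map2_inv2, h, L.inv2_mul, Φ.map2_one]
  have hone' : K.mul (K.inv2 a) a' = K.one x := congrArg Subtype.val hone
  rw [← K.mul_inv2_cancel_left a a', hone', K.mul_one]

/-- π₁-injectivity gives some `c₀` with `g' = g ∘ D(c₀)`, and π₂-surjectivity corrects `c₀`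
by an element of `Ker D` so that it lifts `c`. -/
theorem exists_eq_comp_D_of_map1_eq {x x' : K.Obj} {g g' : K.Hom x x'} {c : L.G2 (Φ.obj x)}
    (h : Φ.map1 g' = L.comp (Φ.map1 g) (L.D c)) :
    ∃ c₁ : K.G2 x, g' = K.comp g (K.D c₁) ∧ Φ.map2 c₁ = c := by
  have hw : Φ.map1 (K.comp (K.inv g) g') = L.D c := by
    rw [Φ.map1_comp, Φ.map1_inv, h, L.inv_comp_cancel_left]
  have hmk : Quot.mk (K.homRel x x) (K.id x) = Quot.mk _ (K.comp (K.inv g) g') := by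
    apply (hΦ.2.1 x).1
    change Quot.mk _ (Φ.map1 (K.id x)) = Quot.mk _ (Φ.map1 (K.comp (K.inv g) g'))
    rw [Φ.map1_id, hw]
    exact Quot.sound ⟨c, by rw [L.id_comp]⟩
  obtain ⟨c₀, hc₀⟩ := homRel_of_mk_eq hmk
  rw [K.id_comp] at hc₀
  have hker : L.D (L.mul (L.inv2 (Φ.map2 c₀)) c) = L.id (Φ.obj x) := by
    rw [L.D_mul, L.D_inv2, ← Φ.map_D, ← hc₀, hw, L.inv_comp]
  obtain ⟨⟨k, hk⟩, hk'⟩ := (hΦ.2.2 x).2 ⟨_, hker⟩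
  refine ⟨K.mul c₀ k, ?_, ?_⟩
  · rw [K.D_mul, hk, K.comp_id, ← hc₀, K.comp_inv_cancel_left]
  · rw [Φ.map2_mul, show Φ.map2 k = _ from congrArg Subtype.val hk', L.mul_inv2_cancel_left]

end IsWeakEquiv

end CrossedGroupoidHom

namespace CosimplicialMor

open CosimplicialCrossedGroupoid CrossedGroupoid

variable {G H : CosimplicialCrossedGroupoid} {F : CosimplicialMor G H} (hF : F.IsWeakEquiv)
include hF

theorem exists_eq_mapHom_comp_D {p : ℕ} {x y : (G.obj 0).Obj} {i j : Fin (p + 1)}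
    (h : (H.obj p).Hom (H.X (F.objD x) p i) (H.X (F.objD y) p j)) :
    ∃ (g : (G.obj p).Hom (G.X x p i) (G.X y p j)) (c : (H.obj p).G2 (H.X (F.objD x) p i)),
      h = (H.obj p).comp (F.mapHom p g) ((H.obj p).D c) := by
  obtain ⟨g, c, hgc⟩ := (hF p).exists_eq_map1_comp_D
    ((H.obj p).hcast (F.app_X x p i).symm (F.app_X y p j).symm h)
  refine ⟨g, (H.obj p).cast2 (F.app_X x p i) c, ?_⟩
  erw [(H.obj p).hcast_eq_iff] at hgc
  erw [hgc, hcast_comp_D]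
  rfl

theorem exists_eq_comp_D_of_mapHom_eq {p : ℕ} {x y : (G.obj 0).Obj} {i j : Fin (p + 1)}
    {g g' : (G.obj p).Hom (G.X x p i) (G.X y p j)} {c : (H.obj p).G2 (H.X (F.objD x) p i)}
    (h : F.mapHom p g' = (H.obj p).comp (F.mapHom p g) ((H.obj p).D c)) :
    ∃ c₁ : (G.obj p).G2 (G.X x p i), g' = (G.obj p).comp g ((G.obj p).D c₁) ∧
      F.mapG2 p c₁ = c := by
  have h' : (F.app p).map1 g' = (H.obj p).comp ((F.app p).map1 g)
      ((H.obj p).D ((H.obj p).cast2 (F.app_X x p i).symm c)) := by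
    apply (H.obj p).hcast_injective (F.app_X x p i) (F.app_X y p j)
    erw [hcast_comp_D, cast2_cast2]
    exact h
  obtain ⟨c₁, hg', hc₁⟩ := (hF p).exists_eq_comp_D_of_map1_eq h'
  refine ⟨c₁, hg', ?_⟩
  erw [mapG2, hc₁, cast2_cast2]
  rfl

theorem eq_of_D_eq_of_mapG2_eq {p : ℕ} {x : (G.obj 0).Obj} {i : Fin (p + 1)}
    {a a' : (G.obj p).G2 (G.X x p i)} (hD : (G.obj p).D a = (G.obj p).D a')
    (h : F.mapG2 p a = F.mapG2 p a') : a = a' :=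
  (hF p).eq_of_D_eq_of_map2_eq hD ((H.obj p).cast2_injective _ h)

theorem exists_gaugeG_eq_of_mapG_eq_gaugeG {x x' : (G.obj 0).Obj} (f : (G.obj 0).Hom x x')
    {g : (G.obj 1).Hom (G.X x 1 0) (G.X x 1 1)} {g' : (G.obj 1).Hom (G.X x' 1 0) (G.X x' 1 1)}
    {c : (H.obj 1).G2 (H.X (F.objD x) 1 0)} (h : F.mapG g' = H.gaugeG (F.mapF f) (F.mapG g) c) :
    ∃ c₀, g' = G.gaugeG f g c₀ ∧ F.mapC c₀ = c := by
  simp only [gaugeG, eq_gaugeHom_iff] at h ⊢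
  have hB : F.mapHom 1 ((G.obj 1).comp ((G.obj 1).inv (G.vtxHom 1 1 f))
      ((G.obj 1).comp g' (G.vtxHom 1 0 f))) = (H.obj 1).comp (F.mapHom 1 g) ((H.obj 1).D c) := by
    rw [F.mapHom_comp, F.mapHom_inv, F.mapHom_comp, F.mapHom_vtxHom, F.mapHom_vtxHom]
    exact h
  exact exists_eq_comp_D_of_mapHom_eq hF hB

theorem exists_isGauge_of_isGauge_mapF (P P' : G.Desc) (f : (G.obj 0).Hom P.x P'.x)
    (c : (H.obj 1).G2 (H.X (F.objD P.x) 1 0))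
    (h : H.IsGauge (F.objD P.x) (F.mapG P.g) (F.mapA P.a) (F.objD P'.x) (F.mapG P'.g)
      (F.mapA P'.a) (F.mapF f) c) :
    ∃ c₀, G.IsGauge P.x P.g P.a P'.x P'.g P'.a f c₀ := by
  rw [isGauge_iff] at h
  obtain ⟨c₀, hg, hc₀⟩ := exists_gaugeG_eq_of_mapG_eq_gaugeG hF f h.1
  refine ⟨c₀, hg, eq_of_D_eq_of_mapG2_eq hF ?_ ?_⟩
  · rw [← (isDescent_iff.mp P'.isDescent).1, hg]
    exact (isDescent_iff.mp (G.isDescent_gauge f c₀ P.isDescent)).1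
  · change F.mapA P'.a = F.mapA (G.transportA f P.g P.a c₀)
    rw [h.2, F.mapA_transportA, hc₀]

theorem gaugeEquiv_of_map {P P' : G.Desc} (f : (H.obj 0).Hom (F.objD P.x) (F.objD P'.x))
    (c : (H.obj 1).G2 (H.X (F.objD P.x) 1 0))
    (h : H.IsGauge (F.objD P.x) (F.mapG P.g) (F.mapA P.a) (F.objD P'.x) (F.mapG P'.g)
      (F.mapA P'.a) f c) :
    G.GaugeEquiv P P' := by
  obtain ⟨f₀, e, hf⟩ := (hF 0).exists_eq_map1_comp_D f
  have hf₀ : (H.obj 0).comp f ((H.obj 0).D ((H.obj 0).inv2 e)) = F.mapF f₀ := by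
    erw [hf, (H.obj 0).D_inv2, (H.obj 0).comp_assoc, (H.obj 0).comp_inv, (H.obj 0).comp_id]
    rfl
  have h' := isGauge_comp_D (isDescent_iff.mp (F.map_isDescent P.isDescent)).1 h
    ((H.obj 0).inv2 e)
  rw [hf₀] at h'
  obtain ⟨c₀, hc₀⟩ := exists_isGauge_of_isGauge_mapF hF P P' f₀ _ h'
  exact ⟨f₀, c₀, hc₀⟩

theorem exists_mapG_eq_gaugeG {y : (H.obj 0).Obj} {x : (G.obj 0).Obj}
    (f : (H.obj 0).Hom y (F.objD x)) (h : (H.obj 1).Hom (H.X y 1 0) (H.X y 1 1)) :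
    ∃ (g : (G.obj 1).Hom (G.X x 1 0) (G.X x 1 1)) (c : (H.obj 1).G2 (H.X y 1 0)),
      F.mapG g = H.gaugeG f h c := by
  obtain ⟨g, c, hgc⟩ := exists_eq_mapHom_comp_D hF
    ((H.obj 1).comp ((H.obj 1).comp (H.vtxHom 1 1 f) h) ((H.obj 1).inv (H.vtxHom 1 0 f)))
  exact ⟨g, _, (H.obj 1).eq_gaugeHom_of_comp_eq_comp_D hgc⟩

theorem exists_isDescent_mapA_eq {x : (G.obj 0).Obj} {g : (G.obj 1).Hom (G.X x 1 0) (G.X x 1 1)}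
    {b : (H.obj 2).G2 (H.X (F.objD x) 2 0)} (hd : H.IsDescent (F.objD x) (F.mapG g) b) :
    ∃ a, G.IsDescent x g a ∧ F.mapA a = b := by
  rw [isDescent_iff] at hd
  have hdefect : F.mapHom 2 (G.defect g) =
      (H.obj 2).comp (F.mapHom 2 ((G.obj 2).id _)) ((H.obj 2).D b) := by
    rw [F.mapHom_defect, F.mapHom_id, (H.obj 2).id_comp, hd.1]
  obtain ⟨a, ha, hab⟩ := exists_eq_comp_D_of_mapHom_eq hF hdefect
  rw [(G.obj 2).id_comp] at ha
  have hab' : F.mapA a = b := hab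
  refine ⟨a, isDescent_iff.mpr ⟨ha, ?_⟩, hab'⟩
  apply eq_of_D_eq_of_mapG2_eq hF (G.D_twistedLhs_eq_D_twistedRhs ha)
  rw [F.mapG2_twistedLhs, F.mapG2_twistedRhs, hab']
  exact hd.2

theorem exists_isGauge_map (Q : H.Desc) :
    ∃ (P : G.Desc) (f : (H.obj 0).Hom Q.x (F.objD P.x)) (c : (H.obj 1).G2 (H.X Q.x 1 0)),
      H.IsGauge Q.x Q.g Q.a (F.objD P.x) (F.mapG P.g) (F.mapA P.a) f c := by
  obtain ⟨x, ⟨f⟩⟩ := (hF 0).exists_hom_to_obj Q.x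
  obtain ⟨g, c, hg⟩ := exists_mapG_eq_gaugeG hF f Q.g
  have hd : H.IsDescent (F.objD x) (F.mapG g) (H.transportA f Q.g Q.a c) := by
    rw [hg]
    exact H.isDescent_gauge f c Q.isDescent
  obtain ⟨a, ha, hab⟩ := exists_isDescent_mapA_eq hF hd
  exact ⟨⟨x, g, a, ha⟩, f, c, hg, hab⟩

end CosimplicialMor

/-- Main Theorem: a weak equivalence F : G → H of cosimplicial
crossed groupoids induces a bijection on gauge equivalence classes of descent
data: the induced map is injective and surjective. -/
theorem main_theorem {G H : CosimplicialCrossedGroupoid} (F : CosimplicialMor G H)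
    (hF : F.IsWeakEquiv) :
    (∀ P P' : G.Desc,
      (∃ (f : (H.obj 0).Hom (F.objD P.x) (F.objD P'.x))
        (c : (H.obj 1).G2 (H.X (F.objD P.x) 1 0)),
        H.IsGauge (F.objD P.x) (F.mapG P.g) (F.mapA P.a)
          (F.objD P'.x) (F.mapG P'.g) (F.mapA P'.a) f c) →
      G.GaugeEquiv P P') ∧
    (∀ Q : H.Desc, ∃ (P : G.Desc) (f : (H.obj 0).Hom Q.x (F.objD P.x))
      (c : (H.obj 1).G2 (H.X Q.x 1 0)),
      H.IsGauge Q.x Q.g Q.a (F.objD P.x) (F.mapG P.g) (F.mapA P.a) f c) :=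
  ⟨fun _ _ ⟨f, c, h⟩ => F.gaugeEquiv_of_map hF f c h, F.exists_isGauge_map hF⟩
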